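/- If $e \equiv 0 \pmod 8$, then $w_g \equiv c_g \pmod 8$ for all $g \ge 0$, and $w_g \equiv c_g \equiv 0 \pmod 8$ for all odd $g \ge 1$. -/

import Mathlib

open PowerSeries Finset

/-- Integer power of a power series over `ℚ`, using the power-series inverse
for negative exponents. -/
noncomputable def zp (f : PowerSeries ℚ) (n : ℤ) : PowerSeries ℚ :=
  if 0 ≤ n then f ^ n.toNat else f⁻¹ ^ (-n).toNat

/-- The coefficient `w_g` of `∏_{r ≥ 1} (1+q^r)^{-e} · ∏_{s ≥ 1} (1-q^{2s})^{-(24-e)/2}`.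
Since each factor with index `> g` is `1 + O(q^{g+1})`, the coefficient of `q^g`
equals that of the product truncated at index `g`. -/
noncomputable def W (e : ℤ) (g : ℕ) : ℚ :=
  PowerSeries.coeff (R := ℚ) g
    ((∏ r ∈ Icc 1 g, zp (1 + PowerSeries.X ^ r) (-e)) *
     (∏ s ∈ Icc 1 g, zp (1 - PowerSeries.X ^ (2 * s)) (-((24 - e) / 2))))

/-- The coefficient `c_g` of the Yau–Zaslow series `∏_{s ≥ 1} (1-q^s)^{-24}`. -/
noncomputable def C (g : ℕ) : ℚ :=
  PowerSeries.coeff (R := ℚ) g (∏ s ∈ Icc 1 g, ((1 - PowerSeries.X ^ s)⁻¹) ^ 24)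

/-!
Modulo 8 one has `(1 + y) ^ 8 = (1 - y) ^ 8 = (1 - y ^ 2) ^ 4`. Hence, for `e = 8 m`, both the factor
`(1 + q^r)^(-8m) (1 - q^(2r))^(-(12 - 4m))` of the first product and the factor `(1 - q^r)^(-24)`
of the second reduce modulo 8 to `(1 - q^(2r))^(-12)`, a series in `q^2`. So the two products are
integral series that agree modulo 8, and their odd coefficients vanish modulo 8.
-/

namespace PowerSeries

variable {R : Type*} [CommRing R] {r : ℕ}

theorem isUnit_one_add_X_pow (hr : r ≠ 0) : IsUnit (1 + X ^ r : R⟦X⟧) := by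
  simp [isUnit_iff_constantCoeff, hr]

theorem isUnit_one_sub_X_pow (hr : r ≠ 0) : IsUnit (1 - X ^ r : R⟦X⟧) := by
  simp [isUnit_iff_constantCoeff, hr]

theorem expand_two_one_sub_X_pow (r : ℕ) :
    expand 2 two_ne_zero (1 - X ^ r : R⟦X⟧) = 1 - (X ^ r) ^ 2 := by
  simp [← pow_mul, mul_comm]

theorem val_inv_eq_inv_val {k : Type*} [Field k] (u : k⟦X⟧ˣ) : ↑u⁻¹ = (u : k⟦X⟧)⁻¹ := by
  refine (eq_inv_iff_mul_eq_one ?_).mpr u.inv_mul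
  intro h
  have := congrArg constantCoeff u.mul_inv
  rw [map_mul, h, zero_mul, map_one] at this
  exact zero_ne_one this

end PowerSeries

theorem zp_val_units (u : ℚ⟦X⟧ˣ) (n : ℤ) : zp u n = ↑(u ^ n) := by
  unfold zp
  split_ifs with hn
  · rw [← Units.val_pow_eq_pow_val, ← zpow_natCast, Int.toNat_of_nonneg hn]
  · rw [← val_inv_eq_inv_val, ← Units.val_pow_eq_pow_val, ← zpow_natCast, inv_zpow',
      Int.toNat_of_nonneg (by omega), neg_neg]

theorem zp_map_val_units {A : Type*} [Semiring A] (φ : A →+* ℚ⟦X⟧) (u : Aˣ) (n : ℤ) :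
    zp (φ u) n = φ ↑(u ^ n) := by
  change zp ↑(Units.map φ.toMonoidHom u) n = ↑(Units.map φ.toMonoidHom (u ^ n))
  rw [zp_val_units, map_zpow]

section EightEqZero

variable {S : Type*} [CommRing S]

theorem one_add_pow_eight (h8 : (8 : S) = 0) (y : S) : (1 + y) ^ 8 = (1 - y ^ 2) ^ 4 := by
  linear_combination (y + 4 * y ^ 2 + 7 * y ^ 3 + 8 * y ^ 4 + 7 * y ^ 5 + 4 * y ^ 6 + y ^ 7) * h8

theorem one_sub_pow_eight (h8 : (8 : S) = 0) (y : S) : (1 - y) ^ 8 = (1 - y ^ 2) ^ 4 := by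
  simpa [sub_eq_add_neg] using one_add_pow_eight h8 (-y)

variable {a b c : Sˣ} {y : S}

theorem zpow_neg_twentyFour_eq_of_val_eq_one_sub (h8 : (8 : S) = 0) (hb : (b : S) = 1 - y)
    (hc : (c : S) = 1 - y ^ 2) : b ^ (-24 : ℤ) = c ^ (-12 : ℤ) := by
  have h : b ^ 8 = c ^ 4 := Units.ext (by simp [hb, hc, one_sub_pow_eight h8])
  rw [show (-24 : ℤ) = (8 : ℕ) * (-3) by norm_num, zpow_mul, zpow_natCast, h, ← zpow_natCast,
    ← zpow_mul]
  norm_num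

theorem zpow_neg_eight_mul_mul_zpow_eq_of_val_eq_one_add (h8 : (8 : S) = 0)
    (ha : (a : S) = 1 + y) (hc : (c : S) = 1 - y ^ 2) (m : ℤ) :
    a ^ (-(8 * m)) * c ^ (-((24 - 8 * m) / 2)) = c ^ (-12 : ℤ) := by
  have h : a ^ 8 = c ^ 4 := Units.ext (by simp [ha, hc, one_add_pow_eight h8])
  rw [show -(8 * m) = (8 : ℕ) * (-m) by push_cast; ring, zpow_mul, zpow_natCast, h,
    ← zpow_natCast, ← zpow_mul, ← zpow_add]
  congr 1
  omega

end EightEqZero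

section CongrMod

variable (n : ℕ)

/-- Pairs `(F, G)` with `F ≡ G (mod n)` whose common reduction mod `n` is a series in `X ^ 2`. -/
noncomputable def evenCongrModPairs : Subring (ℤ⟦X⟧ × ℤ⟦X⟧) :=
  RingHom.eqLocus ((map (Int.castRingHom (ZMod n))).comp (RingHom.fst _ _))
      ((map (Int.castRingHom (ZMod n))).comp (RingHom.snd _ _)) ⊓
    (expand 2 two_ne_zero : (ZMod n)⟦X⟧ →ₐ[ZMod n] (ZMod n)⟦X⟧).range.toSubring.comap
      ((map (Int.castRingHom (ZMod n))).comp (RingHom.snd _ _))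

noncomputable def ratEvenCongrModPairs : Subring (ℚ⟦X⟧ × ℚ⟦X⟧) :=
  (evenCongrModPairs n).map ((map (Int.castRingHom ℚ)).prodMap (map (Int.castRingHom ℚ)))

variable {n}

theorem mem_evenCongrModPairs {F G : ℤ⟦X⟧} :
    (F, G) ∈ evenCongrModPairs n ↔
      map (Int.castRingHom (ZMod n)) F = map (Int.castRingHom (ZMod n)) G ∧
        map (Int.castRingHom (ZMod n)) G ∈ (expand 2 two_ne_zero).range :=
  Iff.rfl

theorem map_mem_ratEvenCongrModPairs {F G : ℤ⟦X⟧}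
    (hFG : map (Int.castRingHom (ZMod n)) F = map (Int.castRingHom (ZMod n)) G)
    (hG : map (Int.castRingHom (ZMod n)) G ∈ (expand 2 two_ne_zero).range) :
    (map (Int.castRingHom ℚ) F, map (Int.castRingHom ℚ) G) ∈ ratEvenCongrModPairs n :=
  Subring.mem_map.mpr ⟨(F, G), mem_evenCongrModPairs.mpr ⟨hFG, hG⟩, rfl⟩

theorem exists_intCast_coeff_of_mem {w c : ℚ⟦X⟧} (h : (w, c) ∈ ratEvenCongrModPairs n) (g : ℕ) :
    ∃ a b : ℤ, coeff g w = a ∧ coeff g c = b ∧ (n : ℤ) ∣ a - b ∧ (Odd g → (n : ℤ) ∣ b) := by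
  obtain ⟨⟨F, G⟩, hmem, hFw⟩ := Subring.mem_map.mp h
  obtain ⟨hFG, H, hH⟩ := mem_evenCongrModPairs.mp hmem
  simp only [RingHom.prodMap, RingHom.prod_apply, RingHom.comp_apply, RingHom.coe_fst,
    RingHom.coe_snd, Prod.mk.injEq] at hFw
  refine ⟨coeff g F, coeff g G, by simp [← hFw.1], by simp [← hFw.2], ?_, fun hg ↦ ?_⟩
  · rw [← ZMod.intCast_eq_intCast_iff_dvd_sub]
    simpa using (congrArg (coeff g) hFG).symm
  · have hodd : coeff g (map (Int.castRingHom (ZMod n)) G) = 0 := by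
      rw [← hH]
      exact coeff_expand_of_not_dvd _ _ _ (Nat.not_even_iff_odd.mpr hg ∘ even_iff_two_dvd.mpr)
    rw [← ZMod.intCast_zmod_eq_zero_iff_dvd]
    simpa using hodd

theorem exists_coeff_sub_eq_mul_of_mem {w c : ℚ⟦X⟧} (h : (w, c) ∈ ratEvenCongrModPairs n)
    (g : ℕ) : ∃ k : ℤ, coeff g w - coeff g c = n * k := by
  obtain ⟨a, b, ha, hb, ⟨k, hk⟩, -⟩ := exists_intCast_coeff_of_mem h g
  exact ⟨k, by rw [ha, hb, ← Int.cast_sub, hk]; push_cast; rfl⟩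

theorem exists_coeff_eq_mul_of_mem_of_odd {w c : ℚ⟦X⟧} (h : (w, c) ∈ ratEvenCongrModPairs n)
    {g : ℕ} (hg : Odd g) : (∃ k : ℤ, coeff g w = n * k) ∧ ∃ k : ℤ, coeff g c = n * k := by
  obtain ⟨a, b, ha, hb, ⟨k, hk⟩, hodd⟩ := exists_intCast_coeff_of_mem h g
  obtain ⟨l, hl⟩ := hodd hg
  refine ⟨⟨k + l, ?_⟩, ⟨l, by rw [hb, hl]; push_cast; rfl⟩⟩
  rw [ha, show a = n * k + b by omega, hl]
  push_cast
  ring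

end CongrMod

theorem factor_mem_ratEvenCongrModPairs {e : ℤ} (he : 8 ∣ e) {r : ℕ} (hr : r ≠ 0) :
    (zp (1 + X ^ r) (-e) * zp (1 - X ^ (2 * r)) (-((24 - e) / 2)), ((1 - X ^ r)⁻¹) ^ 24) ∈
      ratEvenCongrModPairs 8 := by
  obtain ⟨m, rfl⟩ := he
  let u := (isUnit_one_add_X_pow (R := ℤ) hr).unit
  let v := (isUnit_one_sub_X_pow (R := ℤ) hr).unit
  let v₂ := Units.map (expand 2 two_ne_zero : ℤ⟦X⟧ →ₐ[ℤ] ℤ⟦X⟧).toMonoidHom v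
  have hu : (u : ℤ⟦X⟧) = 1 + X ^ r := IsUnit.unit_spec _
  have hv : (v : ℤ⟦X⟧) = 1 - X ^ r := IsUnit.unit_spec _
  have hv₂ : (v₂ : ℤ⟦X⟧) = 1 - (X ^ r) ^ 2 := by
    simp only [v₂, Units.coe_map, hv]
    exact expand_two_one_sub_X_pow r
  let ψ := (map (Int.castRingHom (ZMod 8))).toMonoidHom
  have h8 : (8 : (ZMod 8)⟦X⟧) = 0 := by
    rw [← map_ofNat PowerSeries.C 8, show (8 : ZMod 8) = 0 from rfl, map_zero]
  have hψu : (Units.map ψ u : (ZMod 8)⟦X⟧) = 1 + X ^ r := by simp [ψ, hu]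
  have hψv : (Units.map ψ v : (ZMod 8)⟦X⟧) = 1 - X ^ r := by simp [ψ, hv]
  have hψv₂ : (Units.map ψ v₂ : (ZMod 8)⟦X⟧) = 1 - (X ^ r) ^ 2 := by simp [ψ, hv₂]
  have hW : ψ ↑(u ^ (-(8 * m)) * v₂ ^ (-((24 - 8 * m) / 2))) = ↑(Units.map ψ v₂ ^ (-12 : ℤ)) := by
    rw [← Units.coe_map, map_mul, map_zpow, map_zpow,
      zpow_neg_eight_mul_mul_zpow_eq_of_val_eq_one_add h8 hψu hψv₂]
  have hC : ψ ↑(v ^ (-24 : ℤ)) = ↑(Units.map ψ v₂ ^ (-12 : ℤ)) := by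
    rw [← Units.coe_map, map_zpow, zpow_neg_twentyFour_eq_of_val_eq_one_sub h8 hψv hψv₂]
  have hE : (↑(Units.map ψ v₂ ^ (-12 : ℤ)) : (ZMod 8)⟦X⟧) =
      expand 2 two_ne_zero (ψ ↑(v ^ (-12 : ℤ))) := by
    have hψ_expand :
        Units.map ψ v₂ = Units.map (expand 2 two_ne_zero).toMonoidHom (Units.map ψ v) :=
      Units.ext (map_expand _ _ _ _)
    rw [hψ_expand, ← map_zpow, ← map_zpow]
    rfl
  have hcongr : map (Int.castRingHom (ZMod 8)) ↑(u ^ (-(8 * m)) * v₂ ^ (-((24 - 8 * m) / 2))) =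
      map (Int.castRingHom (ZMod 8)) ↑(v ^ (-24 : ℤ)) := hW.trans hC.symm
  have heven : map (Int.castRingHom (ZMod 8)) ↑(v ^ (-24 : ℤ)) ∈ (expand 2 two_ne_zero).range :=
    ⟨_, (hC.trans hE).symm⟩
  convert map_mem_ratEvenCongrModPairs hcongr heven using 2
  · rw [Units.val_mul, map_mul, ← zp_map_val_units, ← zp_map_val_units, hu, hv₂]
    simp [← pow_mul, mul_comm]
  · rw [← zp_map_val_units, hv]
    simp [zp]

theorem prod_mem_ratEvenCongrModPairs {e : ℤ} (he : 8 ∣ e) (g : ℕ) :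
    ((∏ r ∈ Icc 1 g, zp (1 + X ^ r) (-e)) * ∏ s ∈ Icc 1 g, zp (1 - X ^ (2 * s)) (-((24 - e) / 2)),
      ∏ s ∈ Icc 1 g, ((1 - X ^ s)⁻¹) ^ 24) ∈ ratEvenCongrModPairs 8 := by
  rw [← prod_mul_distrib, prod_mk_prod]
  exact prod_mem fun r hr ↦ factor_mem_ratEvenCongrModPairs he (by grind)

theorem stmt10 (e : ℤ) (he : (8 : ℤ) ∣ e) :
    (∀ g : ℕ, ∃ k : ℤ, W e g - _root_.C g = 8 * k) ∧
    (∀ g : ℕ, 1 ≤ g → Odd g →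
      (∃ k : ℤ, W e g = 8 * k) ∧ (∃ k : ℤ, _root_.C g = 8 * k)) :=
  ⟨fun g ↦ exists_coeff_sub_eq_mul_of_mem (prod_mem_ratEvenCongrModPairs he g) g,
    fun g _ hg ↦ exists_coeff_eq_mul_of_mem_of_odd (prod_mem_ratEvenCongrModPairs he g) hg⟩
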